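/- arXiv:1705.02361 — 2 statements merged into one kernel-verified Lean document; each statement's English description precedes it below -/
import Mathlib

section
/- Let m₁, m₂ ∈ {−1,1}, let Q(θ) = (1/2)(m₁ cos θ + m₂ sin θ), I(θ) = (1/2)(−m₁ sin θ + m₂ cos θ), and φ(θ) = I(θ)·sign(Q(θ)) − Q(θ)·sign(I(θ)). Then for every θ with −π/4 < θ < π/4 one has φ(θ) = −sin θ, independently of the choice of m₁ and m₂. -/
lemma cos_add_sin_pos {θ : ℝ} (h1 : -(Real.pi / 4) < θ) (h2 : θ < Real.pi / 4) :
    0 < Real.cos θ + Real.sin θ := by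
  have hs : 0 < Real.sin (θ + Real.pi / 4) := by
    apply Real.sin_pos_of_pos_of_lt_pi <;> nlinarith [Real.pi_pos]
  rw [Real.sin_add, Real.cos_pi_div_four, Real.sin_pi_div_four] at hs
  nlinarith [Real.sq_sqrt (by norm_num : (2:ℝ) ≥ 0), Real.sqrt_pos.mpr (by norm_num : (0:ℝ) < 2)]

lemma cos_sub_sin_pos {θ : ℝ} (h1 : -(Real.pi / 4) < θ) (h2 : θ < Real.pi / 4) :
    0 < Real.cos θ - Real.sin θ := by
  have hs : 0 < Real.cos (θ + Real.pi / 4) := by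
    apply Real.cos_pos_of_mem_Ioo
    refine ⟨by nlinarith [Real.pi_pos], by nlinarith [Real.pi_pos]⟩
  rw [Real.cos_add, Real.cos_pi_div_four, Real.sin_pi_div_four] at hs
  nlinarith [Real.sq_sqrt (by norm_num : (2:ℝ) ≥ 0), Real.sqrt_pos.mpr (by norm_num : (0:ℝ) < 2)]

theorem phase_detector_eq_neg_sin (m₁ m₂ : ℝ)
    (hm₁ : m₁ = -1 ∨ m₁ = 1) (hm₂ : m₂ = -1 ∨ m₂ = 1)
    (Q I φ : ℝ → ℝ)
    (hQ : Q = fun θ => (1 / 2) * (m₁ * Real.cos θ + m₂ * Real.sin θ))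
    (hI : I = fun θ => (1 / 2) * (-m₁ * Real.sin θ + m₂ * Real.cos θ))
    (hφ : φ = fun θ => I θ * Real.sign (Q θ) - Q θ * Real.sign (I θ)) :
    ∀ θ : ℝ, -(Real.pi / 4) < θ → θ < Real.pi / 4 → φ θ = -Real.sin θ := by
  intro θ h1 h2
  have hps := cos_add_sin_pos h1 h2
  have hms := cos_sub_sin_pos h1 h2
  subst hQ hI hφ
  rcases hm₁ with rfl | rfl <;> rcases hm₂ with rfl | rfl <;> simp only
  · -- m₁ = -1, m₂ = -1 : Q = -(c+s)/2 < 0, I = (s-c)/2 < 0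
    rw [Real.sign_of_neg (by nlinarith), Real.sign_of_neg (by nlinarith)]; ring
  · -- m₁ = -1, m₂ = 1 : Q = (s-c)/2 < 0, I = (s+c)/2 > 0
    rw [Real.sign_of_neg (by nlinarith), Real.sign_of_pos (by nlinarith)]; ring
  · -- m₁ = 1, m₂ = -1 : Q = (c-s)/2 > 0, I = -(s+c)/2 < 0
    rw [Real.sign_of_pos (by nlinarith), Real.sign_of_neg (by nlinarith)]; ring
  · -- m₁ = 1, m₂ = 1 : Q = (c+s)/2 > 0, I = (c-s)/2 > 0
    rw [Real.sign_of_pos (by nlinarith), Real.sign_of_pos (by nlinarith)]; ring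
end

section
/- With the notation of the previous statement, for every θ with π/4 < θ < 3π/4 one has φ(θ) = cos θ, independently of m₁, m₂ ∈ {−1,1}. -/
theorem phase_detector_eq_cos (m₁ m₂ : ℝ)
    (hm₁ : m₁ = -1 ∨ m₁ = 1) (hm₂ : m₂ = -1 ∨ m₂ = 1)
    (Q I φ : ℝ → ℝ)
    (hQ : Q = fun θ => (1 / 2) * (m₁ * Real.cos θ + m₂ * Real.sin θ))
    (hI : I = fun θ => (1 / 2) * (-m₁ * Real.sin θ + m₂ * Real.cos θ))
    (hφ : φ = fun θ => I θ * Real.sign (Q θ) - Q θ * Real.sign (I θ)) :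
    ∀ θ : ℝ, Real.pi / 4 < θ → θ < 3 * Real.pi / 4 → φ θ = Real.cos θ := by
  intro θ h1 h2
  have hpi := Real.pi_pos
  -- sin θ - cos θ > 0
  have hs1 : 0 < Real.sin (θ - Real.pi / 4) :=
    Real.sin_pos_of_pos_of_lt_pi (by linarith) (by linarith)
  have hs2 : 0 < Real.sin (θ + Real.pi / 4) :=
    Real.sin_pos_of_pos_of_lt_pi (by linarith) (by linarith)
  rw [Real.sin_sub, Real.cos_pi_div_four, Real.sin_pi_div_four] at hs1
  rw [Real.sin_add, Real.cos_pi_div_four, Real.sin_pi_div_four] at hs2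
  have hr2 : 0 < Real.sqrt 2 := by positivity
  have hd : 0 < Real.sin θ - Real.cos θ := by nlinarith
  have ha : 0 < Real.sin θ + Real.cos θ := by nlinarith
  subst hQ hI hφ
  rcases hm₁ with rfl | rfl <;> rcases hm₂ with rfl | rfl <;> simp only <;>
    [ (rw [Real.sign_of_neg (by nlinarith), Real.sign_of_pos (by nlinarith)]);
      (rw [Real.sign_of_pos (by nlinarith), Real.sign_of_pos (by nlinarith)]);
      (rw [Real.sign_of_neg (by nlinarith), Real.sign_of_neg (by nlinarith)]);
      (rw [Real.sign_of_pos (by nlinarith), Real.sign_of_neg (by nlinarith)]) ] <;>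
    ring
end
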